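/- (Proposition 2, 3d reciprocity over a closed vortex filament.) Let ω : ℝ³ → ℝ³ be continuously differentiable, let T > 0, and let γ : ℝ → ℝ³ be a T-periodic continuously differentiable curve satisfying γ'(t) = ω(γ(t)) for all t (a closed vortex filament). Let a, c ∈ ℝ³ be points not on the curve (a, c ∉ range γ) with a ≠ c. For each t, with ωb := ω(γ(t)), define E_a(t) := d/ds at s = 0 of I(ωb + s·Wa(t), ω(c), c − (γ(t) + s·K(a, ω(a), γ(t)))) where Wa(t) := (Fréchet derivative at γ(t) of x ↦ K(a, ω(a), x)) applied to ωb, and define E_c(t) symmetrically with a and c interchanged. Then ∫₀ᵀ (E_a(t) + E_c(t)) dt = 0. That is, a's action on the filament affects the interaction energy between the filament and c in an exactly equal and opposite way as c's action on the filament affects the interaction energy between a and the filament. -/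

import Mathlib

open MeasureTheory Real
open scoped RealInnerProductSpace

noncomputable section

/-- The cross product on `EuclideanSpace ℝ (Fin 3)`. -/
def cross (u v : EuclideanSpace ℝ (Fin 3)) : EuclideanSpace ℝ (Fin 3) :=
  (WithLp.equiv 2 (Fin 3 → ℝ)).symm
    ![u 1 * v 2 - u 2 * v 1, u 2 * v 0 - u 0 * v 2, u 0 * v 1 - u 1 * v 0]

/-- The Biot-Savart velocity induced at `x` by a point vortex at `p` with vorticity `w`:
`K(p, w, x) = (1/(4π))·(w × (x − p))/‖x − p‖³`. -/
def K (p w x : EuclideanSpace ℝ (Fin 3)) : EuclideanSpace ℝ (Fin 3) :=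
  (1 / (4 * π)) • ((‖x - p‖ ^ 3)⁻¹ • cross w (x - p))

/-- The interaction energy of vorticity vectors `u, v` at displacement `d`:
`I(u, v, d) = (1/(16π‖d‖))·(⟨u, v⟩ + ⟨u, d⟩⟨v, d⟩/‖d‖²)`. -/
def Ienergy (u v d : EuclideanSpace ℝ (Fin 3)) : ℝ :=
  (1 / (16 * π * ‖d‖)) * (⟪u, v⟫ + ⟪u, d⟫ * ⟪v, d⟫ / ‖d‖ ^ 2)

/-!
Along the filament, `E_a(t) + E_c(t)` is the derivative of
`H(t) = I(K_a(γ t), ω c, c - γ t) + I(K_c(γ t), ω a, a - γ t)`, where `K_p = K(p, ω p, ·)`.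
Indeed, since `γ' = ω ∘ γ`, both expressions are derivatives of `I` in which `ω(γ t)` and the
induced velocity `K_p(γ t)` trade places between the first and the third slot; each exchange
changes the value by half a triple product `⟪ω(γ t) × K_a, K_c⟫`, resp. `⟪ω(γ t) × K_c, K_a⟫`, and
these cancel. As `H` is `T`-periodic, the integral over a period vanishes.
-/

open scoped Matrix

local notation "ℝ³" => EuclideanSpace ℝ (Fin 3)

theorem HasDerivAt.norm {F : Type*} [NormedAddCommGroup F] [InnerProductSpace ℝ F]
    {f : ℝ → F} {f' : F} {t : ℝ} (hf : HasDerivAt f f' t) (h0 : f t ≠ 0) :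
    HasDerivAt (‖f ·‖) (⟪f t, f'⟫ / ‖f t‖) t := by
  have hsqrt := hf.norm_sq.sqrt (by positivity)
  simp only [Real.sqrt_sq (norm_nonneg _)] at hsqrt
  convert hsqrt using 1
  field_simp

theorem Function.Periodic.intervalIntegral_eq_zero_of_hasDerivAt {E : Type*}
    [NormedAddCommGroup E] [NormedSpace ℝ E] [CompleteSpace E] {F f : ℝ → E} {T : ℝ}
    (hF : Function.Periodic F T) (hderiv : ∀ t, HasDerivAt F (f t) t)
    (hf : IntervalIntegrable f volume 0 T) : ∫ t in (0 : ℝ)..T, f t = 0 := by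
  rw [intervalIntegral.integral_eq_sub_of_hasDerivAt (fun t _ => hderiv t) hf, sub_eq_zero]
  simpa using hF 0

theorem cross_eq_crossProduct (u v : ℝ³) :
    cross u v = WithLp.toLp 2 (WithLp.ofLp u ⨯₃ WithLp.ofLp v) := rfl

theorem inner_cross_cross (u v w x : ℝ³) :
    ⟪cross u v, cross w x⟫ = ⟪u, w⟫ * ⟪v, x⟫ - ⟪u, x⟫ * ⟪v, w⟫ := by
  simp only [EuclideanSpace.inner_eq_star_dotProduct, cross_eq_crossProduct, star_trivial,
    cross_dot_cross, dotProduct_comm (WithLp.ofLp w), dotProduct_comm (WithLp.ofLp x)]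
  ring

theorem inner_cross_add_inner_cross (u v w : ℝ³) :
    ⟪cross u v, w⟫ + ⟪cross u w, v⟫ = 0 := by
  simp only [EuclideanSpace.inner_eq_star_dotProduct, cross_eq_crossProduct, star_trivial]
  rw [triple_product_permutation (WithLp.ofLp v), triple_product_permutation (WithLp.ofLp w),
    ← dotProduct_add, cross_anticomm', dotProduct_zero]

theorem cross_neg_right (u v : ℝ³) : cross u (-v) = -cross u v := by
  rw [cross_eq_crossProduct, cross_eq_crossProduct, WithLp.ofLp_neg, map_neg, WithLp.toLp_neg]

theorem contDiff_cross_right (w : ℝ³) {n : WithTop ℕ∞} : ContDiff ℝ n (cross w) :=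
  let e := EuclideanSpace.equiv (Fin 3) ℝ
  let L := LinearMap.toContinuousLinearMap (crossProduct (WithLp.ofLp w))
  (e.symm.contDiff.comp L.contDiff).comp e.contDiff

theorem contDiffAt_K (p w : ℝ³) {x : ℝ³} (hx : x ≠ p) {n : WithTop ℕ∞} :
    ContDiffAt ℝ n (K p w) x := by
  have hsub : ContDiffAt ℝ n (· - p) x := contDiffAt_id.sub contDiffAt_const
  have hnorm : ‖x - p‖ ^ 3 ≠ 0 := by simpa [sub_eq_zero] using hx
  exact (((hsub.norm ℝ (sub_ne_zero.2 hx)).pow 3).inv hnorm |>.smul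
    ((contDiff_cross_right w).contDiffAt.comp x hsub)).const_smul _

def ienergyDeriv (u v d W h : ℝ³) : ℝ :=
  (⟪W, v⟫ / ‖d‖ + ⟪W, d⟫ * ⟪v, d⟫ / ‖d‖ ^ 3
    + (⟪u, h⟫ * ⟪v, d⟫ + ⟪u, d⟫ * ⟪v, h⟫ - ⟪u, v⟫ * ⟪d, h⟫) / ‖d‖ ^ 3
    - 3 * ⟪u, d⟫ * ⟪v, d⟫ * ⟪d, h⟫ / ‖d‖ ^ 5) / (16 * π)

theorem hasDerivAt_ienergy {u d : ℝ → ℝ³} {W h : ℝ³} (v : ℝ³) {t : ℝ}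
    (hu : HasDerivAt u W t) (hd : HasDerivAt d h t) (h0 : d t ≠ 0) :
    HasDerivAt (fun s => Ienergy (u s) v (d s)) (ienergyDeriv (u t) v (d t) W h) t := by
  have hnorm := hd.norm h0
  have hpos : 0 < ‖d t‖ := norm_pos_iff.2 h0
  have huv : HasDerivAt (fun s => ⟪u s, v⟫) ⟪W, v⟫ t := by
    simpa using hu.inner ℝ (hasDerivAt_const t v)
  have hvd : HasDerivAt (fun s => ⟪v, d s⟫) ⟪v, h⟫ t := by
    simpa using (hasDerivAt_const t v).inner ℝ hd
  have hexpr := ((hnorm.const_mul (16 * π)).inv (mul_pos (by positivity) hpos).ne').mul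
    (huv.add (((hu.inner ℝ hd).mul hvd).div (hnorm.pow 2) (pow_pos hpos 2).ne'))
  have hI : (fun s => Ienergy (u s) v (d s)) = fun s =>
      (16 * π * ‖d s‖)⁻¹ * (⟪u s, v⟫ + ⟪u s, d s⟫ * ⟪v, d s⟫ / ‖d s‖ ^ 2) := by
    simp only [Ienergy, one_div]
  rw [hI]
  refine hexpr.congr_deriv ?_
  simp only [ienergyDeriv, Pi.add_apply, Pi.mul_apply, Pi.div_apply, Pi.pow_apply, Pi.inv_apply,
    real_inner_comm h (d t)]
  field_simp
  ring

theorem deriv_ienergy_affine (u W v c V : ℝ³) {x : ℝ³} (hx : x ≠ c) :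
    deriv (fun s : ℝ => Ienergy (u + s • W) v (c - (x + s • V))) 0
      = ienergyDeriv u v (c - x) W (-V) := by
  have hu : HasDerivAt (fun s : ℝ => u + s • W) W 0 := by
    simpa using ((hasDerivAt_id (0 : ℝ)).smul_const W).const_add u
  have hd : HasDerivAt (fun s : ℝ => c - (x + s • V)) (-V) 0 := by
    simpa using (((hasDerivAt_id (0 : ℝ)).smul_const V).const_add x).const_sub c
  simpa using (hasDerivAt_ienergy v hu hd (by simpa [sub_eq_zero] using hx.symm)).deriv

theorem ienergyDeriv_neg_swap (u v d W V : ℝ³) :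
    ienergyDeriv u v d W (-V) =
      ienergyDeriv V v d W (-u) + ⟪cross u V, cross v d⟫ / (8 * π * ‖d‖ ^ 3) := by
  simp only [ienergyDeriv, inner_cross_cross, inner_neg_right, real_inner_comm u V,
    real_inner_comm d V, real_inner_comm u v, real_inner_comm v V, real_inner_comm u d]
  ring

theorem ienergyDeriv_neg_K (u w c x W V : ℝ³) :
    ienergyDeriv u w (c - x) W (-V) =
      ienergyDeriv V w (c - x) W (-u) - ⟪cross u V, K c w x⟫ / 2 := by
  rw [ienergyDeriv_neg_swap, K, ← neg_sub c x, cross_neg_right, norm_neg]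
  simp only [inner_smul_right, inner_neg_right]
  ring

theorem ienergyDeriv_reciprocity (u wa wc a c x Wa Wc : ℝ³) :
    ienergyDeriv u wc (c - x) Wa (-K a wa x) + ienergyDeriv u wa (a - x) Wc (-K c wc x) =
      ienergyDeriv (K a wa x) wc (c - x) Wa (-u) + ienergyDeriv (K c wc x) wa (a - x) Wc (-u) := by
  rw [ienergyDeriv_neg_K u wc c x Wa, ienergyDeriv_neg_K u wa a x Wc]
  linarith [inner_cross_add_inner_cross u (K a wa x) (K c wc x)]

theorem Continuous.ienergyDeriv {α : Type*} [TopologicalSpace α] {u d W h : α → ℝ³} (v : ℝ³)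
    (hu : Continuous u) (hd : Continuous d) (hW : Continuous W) (hh : Continuous h)
    (h0 : ∀ t, d t ≠ 0) : Continuous fun t => ienergyDeriv (u t) v (d t) (W t) (h t) := by
  have hn : ∀ t, ‖d t‖ ≠ 0 := fun t => norm_ne_zero_iff.2 (h0 t)
  unfold _root_.ienergyDeriv
  fun_prop (disch := simp [hn])

/-- `E_a(t)` of the paper. -/
def filamentEnergyRate (ω : ℝ³ → ℝ³) (γ : ℝ → ℝ³) (a c : ℝ³) (t : ℝ) : ℝ :=
  deriv (fun s : ℝ => Ienergy (ω (γ t) + s • fderiv ℝ (K a (ω a)) (γ t) (ω (γ t))) (ω c)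
    (c - (γ t + s • K a (ω a) (γ t)))) 0

theorem filamentEnergyRate_eq (ω : ℝ³ → ℝ³) (γ : ℝ → ℝ³) (a : ℝ³) {c : ℝ³} {t : ℝ}
    (hc : γ t ≠ c) :
    filamentEnergyRate ω γ a c t = ienergyDeriv (ω (γ t)) (ω c) (c - γ t)
      (fderiv ℝ (K a (ω a)) (γ t) (ω (γ t))) (-K a (ω a) (γ t)) :=
  deriv_ienergy_affine _ _ _ _ _ hc

theorem continuous_filamentEnergyRate {ω : ℝ³ → ℝ³} {γ : ℝ → ℝ³} {a c : ℝ³}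
    (hω : Continuous ω) (hγ : Continuous γ) (ha : ∀ t, γ t ≠ a) (hc : ∀ t, γ t ≠ c) :
    Continuous (filamentEnergyRate ω γ a c) := by
  have hK : Continuous fun t => K a (ω a) (γ t) := continuous_iff_continuousAt.2 fun t =>
    (contDiffAt_K a (ω a) (ha t) (n := 0)).continuousAt.comp hγ.continuousAt
  have hDK : Continuous fun t => fderiv ℝ (K a (ω a)) (γ t) := continuous_iff_continuousAt.2
    fun t => ((contDiffAt_K a (ω a) (ha t) (n := 1)).continuousAt_fderiv one_ne_zero).comp
      hγ.continuousAt
  refine ((hω.comp hγ).ienergyDeriv (ω c) (continuous_const.sub hγ)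
    (hDK.clm_apply (hω.comp hγ)) hK.neg fun t => sub_ne_zero.2 (hc t).symm).congr fun t => ?_
  exact (filamentEnergyRate_eq ω γ a (hc t)).symm

theorem hasDerivAt_filamentPairEnergy {ω : ℝ³ → ℝ³} {γ : ℝ → ℝ³} {a c : ℝ³} {t : ℝ}
    (hγ : HasDerivAt γ (ω (γ t)) t) (ha : γ t ≠ a) (hc : γ t ≠ c) :
    HasDerivAt (fun t => Ienergy (K a (ω a) (γ t)) (ω c) (c - γ t)
        + Ienergy (K c (ω c) (γ t)) (ω a) (a - γ t))
      (filamentEnergyRate ω γ a c t + filamentEnergyRate ω γ c a t) t := by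
  have hK : ∀ {p : ℝ³}, γ t ≠ p → HasDerivAt (fun t => K p (ω p) (γ t))
      (fderiv ℝ (K p (ω p)) (γ t) (ω (γ t))) t := fun hp =>
    ((contDiffAt_K _ _ hp (n := 1)).differentiableAt one_ne_zero).hasFDerivAt.comp_hasDerivAt t hγ
  rw [filamentEnergyRate_eq ω γ a hc, filamentEnergyRate_eq ω γ c ha, ienergyDeriv_reciprocity]
  exact (hasDerivAt_ienergy _ (hK ha) (hγ.const_sub c) (sub_ne_zero.2 hc.symm)).add
    (hasDerivAt_ienergy _ (hK hc) (hγ.const_sub a) (sub_ne_zero.2 ha.symm))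

theorem filament_reciprocity_general (ω : EuclideanSpace ℝ (Fin 3) → EuclideanSpace ℝ (Fin 3))
    (hω : ContDiff ℝ 1 ω) (T : ℝ) (γ : ℝ → EuclideanSpace ℝ (Fin 3))
    (hper : Function.Periodic γ T) (hγ : ∀ t, HasDerivAt γ (ω (γ t)) t)
    (a c : EuclideanSpace ℝ (Fin 3)) (ha : a ∉ Set.range γ) (hc : c ∉ Set.range γ) :
    ∫ t in (0 : ℝ)..T,
        (deriv (fun s : ℝ =>
            Ienergy (ω (γ t) + s • (fderiv ℝ (K a (ω a)) (γ t) (ω (γ t)))) (ω c)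
              (c - (γ t + s • K a (ω a) (γ t)))) 0 +
          deriv (fun s : ℝ =>
            Ienergy (ω (γ t) + s • (fderiv ℝ (K c (ω c)) (γ t) (ω (γ t)))) (ω a)
              (a - (γ t + s • K c (ω c) (γ t)))) 0) = 0 := by
  have hγa : ∀ t, γ t ≠ a := fun t h => ha ⟨t, h⟩
  have hγc : ∀ t, γ t ≠ c := fun t h => hc ⟨t, h⟩
  have hγcont : Continuous γ := continuous_iff_continuousAt.2 fun t => (hγ t).continuousAt
  change ∫ t in (0 : ℝ)..T, (filamentEnergyRate ω γ a c t + filamentEnergyRate ω γ c a t) = 0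
  refine Function.Periodic.intervalIntegral_eq_zero_of_hasDerivAt (fun t => by simp only [hper t])
    (fun t => hasDerivAt_filamentPairEnergy (hγ t) (hγa t) (hγc t)) ?_
  exact ((continuous_filamentEnergyRate hω.continuous hγcont hγa hγc).add
    (continuous_filamentEnergyRate hω.continuous hγcont hγc hγa)).intervalIntegrable 0 T

/-- Proposition 2 (3d reciprocity over a closed vortex filament): for a closed
vorticity streamline `γ` and points `a, c` off the filament, the total effect of `a`'s
action on the filament on the interaction energy with `c`, plus the total effect of
`c`'s action on the filament on the interaction energy with `a`, vanishes. -/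
theorem filament_reciprocity (ω : EuclideanSpace ℝ (Fin 3) → EuclideanSpace ℝ (Fin 3))
    (hω : ContDiff ℝ 1 ω) (T : ℝ) (hT : 0 < T) (γ : ℝ → EuclideanSpace ℝ (Fin 3))
    (hper : Function.Periodic γ T) (hγ : ∀ t, HasDerivAt γ (ω (γ t)) t)
    (a c : EuclideanSpace ℝ (Fin 3)) (ha : a ∉ Set.range γ) (hc : c ∉ Set.range γ)
    (hac : a ≠ c) :
    ∫ t in (0 : ℝ)..T,
        (deriv (fun s : ℝ =>
            Ienergy (ω (γ t) + s • (fderiv ℝ (K a (ω a)) (γ t) (ω (γ t)))) (ω c)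
              (c - (γ t + s • K a (ω a) (γ t)))) 0 +
          deriv (fun s : ℝ =>
            Ienergy (ω (γ t) + s • (fderiv ℝ (K c (ω c)) (γ t) (ω (γ t)))) (ω a)
              (a - (γ t + s • K c (ω c) (γ t)))) 0) = 0 :=
  filament_reciprocity_general ω hω T γ hper hγ a c ha hc
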